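/- Fix 0 < δ < 1/2. Let (n_k) be an increasing sequence of positive integers such that n_{k+1}/n_k ≥ 4/(1−2δ) for all sufficiently large k and n_k^{1/k} → ∞. Then the set S_δ = {x ∈ [0,1] : ‖n_k x‖ > δ for all sufficiently large k} has Hausdorff dimension 1. -/

import Mathlib

open Filter MeasureTheory

/-- Distance from a real number to the nearest integer. -/
noncomputable def nint (x : ℝ) : ℝ := |x - round x|

/-!
After a shift, `q k = n (k + K)` satisfies `4 q k ≤ (1 - 2δ) q (k + 1)` for every `k`. A point `x`
with `q k x ∈ (J + δ, J + 1 - δ)`, `J ∈ ℤ`, has `‖q k x‖ > δ`, and such a window of level `k`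
contains `m k ≈ (1 - 2δ) q (k + 1) / (2 q k) ≥ 2` windows of level `k + 1`. Nesting the windows
along the mixed-radix digits of `y ∈ [0, 1)` gives an injective map of `[0, 1)` into `S_δ`. If
the digits of `y` and `y'` first differ at level `k`, by `u`, the images are at least
`2δu / q (k + 1)` apart while `|y - y'| ≤ 2u / (m 0 ⋯ m k)`, and
`m 0 ⋯ m k ≥ ((1 - 2δ) / 4) ^ (k + 1) q (k + 1) / q 0`. Because `n k ^ (1 / k) → ∞`, the geometric
factor is negligible against `q k ^ (1 - r)`, so the inverse map is `r`-Hölder for every `r < 1`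
and `dimH S_δ ≥ r`.
-/

open Set
open scoped NNReal ENNReal

theorem dimH_le_dimH_image_div_of_dist_le {X Y : Type*} [MetricSpace X] [MetricSpace Y] {s : Set X}
    {g : X → Y} {C r : ℝ≥0} (hr : 0 < r)
    (h : ∀ x ∈ s, ∀ y ∈ s, dist x y ≤ C * dist (g x) (g y) ^ (r : ℝ)) :
    dimH s ≤ dimH (g '' s) / r := by
  rcases s.eq_empty_or_nonempty with rfl | ⟨x₀, -⟩
  · simp
  have : Nonempty X := ⟨x₀⟩
  have hinj : InjOn g s := fun x hx y hy hxy => dist_le_zero.1 <| by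
    simpa [hxy, Real.zero_rpow (NNReal.coe_ne_zero.2 hr.ne')] using h x hx y hy
  have hinv := hinj.leftInvOn_invFunOn
  have hholder : HolderOnWith C r (Function.invFunOn g s) (g '' s) := by
    rintro _ ⟨x, hx, rfl⟩ _ ⟨y, hy, rfl⟩
    rw [hinv hx, hinv hy, edist_dist, edist_dist, ← ENNReal.ofReal_coe_nnreal,
      ENNReal.ofReal_rpow_of_nonneg dist_nonneg r.coe_nonneg,
      ← ENNReal.ofReal_mul C.coe_nonneg]
    exact ENNReal.ofReal_le_ofReal (h x hx y hy)
  simpa only [hinv.image_image] using hholder.dimH_image_le hr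

theorem exists_forall_one_le_mul_of_eventually {f : ℕ → ℝ} (hpos : ∀ k, 0 < f k)
    (hev : ∀ᶠ k in atTop, 1 ≤ f k) : ∃ B, ∀ k, 1 ≤ B * f k := by
  have hbdd : IsBoundedUnder (· ≤ ·) atTop fun k => (f k)⁻¹ :=
    ⟨1, hev.mono fun k hk => inv_le_one_of_one_le₀ hk⟩
  obtain ⟨B, hB⟩ := hbdd.bddAbove_range
  refine ⟨B, fun k => ?_⟩
  have := hB (mem_range_self k)
  rwa [inv_le_iff_one_le_mul₀ (hpos k)] at this

theorem eventually_one_le_pow_mul_rpow {q : ℕ → ℝ} (hq : ∀ k, 0 ≤ q k)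
    (hgrow : Tendsto (fun k : ℕ => q k ^ (k : ℝ)⁻¹) atTop atTop) {c s : ℝ} (hc : 0 < c)
    (hs : 0 < s) : ∀ᶠ k in atTop, 1 ≤ c ^ k * q k ^ s := by
  filter_upwards [hgrow.eventually_ge_atTop ((c⁻¹) ^ s⁻¹), eventually_ne_atTop 0] with k hk hk0
  have hT : 0 ≤ (c⁻¹) ^ s⁻¹ := by positivity
  have hpow : ((c⁻¹) ^ s⁻¹) ^ k ≤ q k := by
    simpa [Real.rpow_inv_natCast_pow (hq k) hk0] using pow_le_pow_left₀ hT hk k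
  calc (1 : ℝ) = c ^ k * (((c⁻¹) ^ s⁻¹) ^ k) ^ s := by
        rw [← Real.rpow_pow_comm hT, Real.rpow_inv_rpow (by positivity) hs.ne', inv_pow,
          mul_inv_cancel₀ (by positivity)]
    _ ≤ c ^ k * q k ^ s := by gcongr

theorem le_mul_rpow_of_mul_le_one {t a A r : ℝ} (ht : 0 ≤ t) (ha : 0 < a) (hta : t * a ≤ 1)
    (hr : r ≤ 1) (hA : 1 ≤ A * a ^ (1 - r)) : t ≤ A * t ^ r := by
  have hA0 : 0 < A := pos_of_mul_pos_left (one_pos.trans_le hA) (Real.rpow_nonneg ha.le _)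
  rcases ht.eq_or_lt with rfl | htpos
  · exact mul_nonneg hA0.le (Real.rpow_nonneg le_rfl r)
  have hsmall : t ^ (1 - r) ≤ A := by
    calc t ^ (1 - r) ≤ a⁻¹ ^ (1 - r) :=
          Real.rpow_le_rpow ht (by rwa [← one_div, le_div_iff₀ ha]) (by linarith)
      _ ≤ A := by rwa [Real.inv_rpow ha.le, inv_le_iff_one_le_mul₀ (Real.rpow_pos_of_pos ha _)]
  calc t = t ^ (1 - r) * t ^ r := by rw [← Real.rpow_add htpos]; simp
    _ ≤ A * t ^ r := by gcongr

theorem delta_lt_nint_of_mem_Ioo {δ y : ℝ} {J : ℤ} (h : y ∈ Ioo (J + δ) (J + 1 - δ)) :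
    δ < nint y := by
  rcases le_or_gt (round y) J with hJ | hJ
  · have : (round y : ℝ) ≤ J := mod_cast hJ
    exact (by linarith [h.1] : δ < y - round y).trans_le (le_abs_self _)
  · have : (J : ℝ) + 1 ≤ round y := mod_cast hJ
    exact (by linarith [h.2] : δ < -(y - round y)).trans_le (neg_le_abs _)

structure IsLacunary (δ : ℝ) (q : ℕ → ℝ) : Prop where
  delta_pos : 0 < δ
  pos : ∀ k, 0 < q k
  four_mul_le : ∀ k, 4 * q k ≤ (1 - 2 * δ) * q (k + 1)

section Construction

variable (δ : ℝ) (q : ℕ → ℝ)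

noncomputable def branching (k : ℕ) : ℕ := ⌊(1 - 2 * δ) * q (k + 1) / (2 * q k)⌋₊

noncomputable def branchProd (k : ℕ) : ℝ := ∏ j ∈ Finset.range k, (branching δ q j : ℝ)

/-- The level `k` cell of the digit sequence `d` is
`[cellLeft, cellRight] = q k⁻¹ • [J + δ, J + 1 - δ]` with `J = cellIndex d k`. Its children are the
cells with `J' = J₀ + 1 + i`, `i < branching k`, where `J₀` is the first index whose cell starts to
the right of the parent's left end; skipping `J₀` makes every child start strictly inside the
parent. -/
noncomputable def cellIndex (d : ℕ → ℕ) : ℕ → ℤ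
  | 0 => 0
  | k + 1 => ⌈q (k + 1) * ((cellIndex d k + δ) / q k) - δ⌉ + 1 + d k

noncomputable def cellLeft (d : ℕ → ℕ) (k : ℕ) : ℝ := (cellIndex δ q d k + δ) / q k

noncomputable def cellRight (d : ℕ → ℕ) (k : ℕ) : ℝ := (cellIndex δ q d k + 1 - δ) / q k

noncomputable def cantorPoint (d : ℕ → ℕ) : ℝ := ⨆ k, cellLeft δ q d k

/-- The `j`-th digit of `y` in the mixed radix `(branching δ q 0, branching δ q 1, …)`. -/
noncomputable def digit (y : ℝ) (j : ℕ) : ℕ :=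
  ⌊branching δ q j * Int.fract (branchProd δ q j * y)⌋₊

end Construction

section

variable {δ : ℝ} {q : ℕ → ℝ}

theorem branchProd_succ (k : ℕ) :
    branchProd δ q (k + 1) = branchProd δ q k * branching δ q k :=
  Finset.prod_range_succ _ _

theorem cellIndex_congr {d e : ℕ → ℕ} {k : ℕ}
    (hde : ∀ j < k, d j = e j) : cellIndex δ q d k = cellIndex δ q e k := by
  induction k with
  | zero => rfl
  | succ k ih =>
    rw [cellIndex, cellIndex, ih fun j hj => hde j (hj.trans k.lt_succ_self), hde k k.lt_succ_self]

theorem cellLeft_zero (d : ℕ → ℕ) : cellLeft δ q d 0 = δ / q 0 := by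
  simp [cellLeft, cellIndex]

theorem cellLeft_succ (d : ℕ → ℕ) (k : ℕ) :
    cellLeft δ q d (k + 1) = (⌈q (k + 1) * cellLeft δ q d k - δ⌉ + 1 + d k + δ) / q (k + 1) := by
  simp only [cellLeft, cellIndex]
  push_cast
  rfl

theorem cellRight_eq (d : ℕ → ℕ) {k : ℕ} (hq : q k ≠ 0) :
    cellRight δ q d k = cellLeft δ q d k + (1 - 2 * δ) / q k := by
  unfold cellLeft cellRight
  field_simp
  ring

theorem floor_branchProd_succ_mul (y : ℝ) (j : ℕ) :
    ⌊branchProd δ q (j + 1) * y⌋ = branching δ q j * ⌊branchProd δ q j * y⌋ + digit δ q y j := by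
  have hsplit : branchProd δ q (j + 1) * y = ((branching δ q j * ⌊branchProd δ q j * y⌋ : ℤ) : ℝ)
      + branching δ q j * Int.fract (branchProd δ q j * y) := by
    rw [branchProd_succ, Int.fract]
    push_cast
    ring
  rw [hsplit, Int.floor_intCast_add, digit,
    Int.natCast_floor_eq_floor (mul_nonneg (Nat.cast_nonneg _) (Int.fract_nonneg _))]

theorem floor_branchProd_mul_eq {y y' : ℝ} (hy : ⌊y⌋ = ⌊y'⌋) {k : ℕ}
    (hde : ∀ j < k, digit δ q y j = digit δ q y' j) :
    ⌊branchProd δ q k * y⌋ = ⌊branchProd δ q k * y'⌋ := by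
  induction k with
  | zero => simpa [branchProd] using hy
  | succ k ih =>
    rw [floor_branchProd_succ_mul, floor_branchProd_succ_mul,
      ih fun j hj => hde j (hj.trans k.lt_succ_self), hde k k.lt_succ_self]

end

namespace IsLacunary

variable {δ : ℝ} {q : ℕ → ℝ} (h : IsLacunary δ q)
include h

theorem one_sub_two_mul_pos : 0 < 1 - 2 * δ := by
  have := h.four_mul_le 0
  nlinarith [h.pos 0, h.pos 1]

theorem two_le_branching (k : ℕ) : 2 ≤ branching δ q k := by
  have := h.pos k
  refine Nat.le_floor ?_
  rw [le_div_iff₀ (by positivity)]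
  push_cast
  linarith [h.four_mul_le k]

theorem branching_add_two_mul_le (k : ℕ) :
    ((branching δ q k : ℝ) + 2) * q k ≤ (1 - 2 * δ) * q (k + 1) := by
  have hq := h.pos k
  have hX : (0 : ℝ) ≤ (1 - 2 * δ) * q (k + 1) / (2 * q k) :=
    div_nonneg (mul_nonneg h.one_sub_two_mul_pos.le (h.pos _).le) (by positivity)
  have hm : (branching δ q k : ℝ) ≤ _ := Nat.floor_le hX
  have h2 : (2 : ℝ) ≤ branching δ q k := mod_cast h.two_le_branching k
  rw [le_div_iff₀ (by positivity)] at hm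
  nlinarith

theorem branching_mul_le (k : ℕ) : (branching δ q k : ℝ) * q k ≤ q (k + 1) := by
  nlinarith [h.branching_add_two_mul_le k, h.pos k, h.pos (k + 1), h.delta_pos]

theorem le_branching_mul (k : ℕ) :
    (1 - 2 * δ) / 4 * q (k + 1) ≤ branching δ q k * q k := by
  have hq := h.pos k
  have hm : _ < (branching δ q k : ℝ) + 1 :=
    Nat.lt_floor_add_one ((1 - 2 * δ) * q (k + 1) / (2 * q k))
  have h2 : (2 : ℝ) ≤ branching δ q k := mod_cast h.two_le_branching k
  rw [div_lt_iff₀ (by positivity)] at hm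
  nlinarith

theorem pow_le_branchProd (k : ℕ) : (2 : ℝ) ^ k ≤ branchProd δ q k := by
  calc (2 : ℝ) ^ k = ∏ _j ∈ Finset.range k, (2 : ℝ) := by simp
    _ ≤ branchProd δ q k :=
      Finset.prod_le_prod (fun _ _ => zero_le_two) fun j _ => mod_cast h.two_le_branching j

theorem branchProd_pos (k : ℕ) : 0 < branchProd δ q k :=
  (pow_pos two_pos k).trans_le (h.pow_le_branchProd k)

theorem pow_mul_le_branchProd_mul (k : ℕ) :
    ((1 - 2 * δ) / 4) ^ k * q k ≤ branchProd δ q k * q 0 := by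
  induction k with
  | zero => simp [branchProd]
  | succ k ih =>
    have hc : 0 ≤ ((1 - 2 * δ) / 4) ^ k := pow_nonneg (by linarith [h.one_sub_two_mul_pos]) k
    calc ((1 - 2 * δ) / 4) ^ (k + 1) * q (k + 1)
        = ((1 - 2 * δ) / 4) ^ k * ((1 - 2 * δ) / 4 * q (k + 1)) := by ring
      _ ≤ ((1 - 2 * δ) / 4) ^ k * (branching δ q k * q k) :=
        mul_le_mul_of_nonneg_left (h.le_branching_mul k) hc
      _ = branching δ q k * (((1 - 2 * δ) / 4) ^ k * q k) := by ring
      _ ≤ branching δ q k * (branchProd δ q k * q 0) := by gcongr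
      _ = branchProd δ q (k + 1) * q 0 := by rw [branchProd_succ]; ring

theorem cellLeft_lt_cellRight (d : ℕ → ℕ) (k : ℕ) : cellLeft δ q d k < cellRight δ q d k := by
  rw [cellRight_eq d (h.pos k).ne', lt_add_iff_pos_right]
  exact div_pos h.one_sub_two_mul_pos (h.pos k)

theorem cellLeft_add_le_cellLeft_succ (d : ℕ → ℕ) (k : ℕ) :
    cellLeft δ q d k + (1 + d k) / q (k + 1) ≤ cellLeft δ q d (k + 1) := by
  have hq := h.pos (k + 1)
  have hceil := Int.le_ceil (q (k + 1) * cellLeft δ q d k - δ)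
  rw [cellLeft_succ, le_div_iff₀ hq, add_mul, div_mul_cancel₀ _ hq.ne']
  linarith

theorem cellRight_succ_lt {d : ℕ → ℕ} {k : ℕ} (hd : d k < branching δ q k) :
    cellRight δ q d (k + 1) < cellRight δ q d k := by
  have hq := h.pos k
  have hq' := h.pos (k + 1)
  have hceil := Int.ceil_lt_add_one (q (k + 1) * cellLeft δ q d k - δ)
  have hd' : (d k : ℝ) + 1 ≤ branching δ q k := mod_cast hd
  have hm : (branching δ q k : ℝ) + 2 ≤ (1 - 2 * δ) / q k * q (k + 1) := by
    rw [div_mul_eq_mul_div, le_div_iff₀ hq]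
    exact h.branching_add_two_mul_le k
  rw [cellRight_eq d hq.ne', cellRight_eq d hq'.ne', cellLeft_succ, ← add_div,
    div_lt_iff₀ hq', add_mul]
  linarith [h.delta_pos]

theorem strictMono_cellLeft (d : ℕ → ℕ) : StrictMono (cellLeft δ q d) :=
  strictMono_nat_of_lt_succ fun k =>
    lt_of_lt_of_le (lt_add_of_pos_right _ (by have := h.pos (k + 1); positivity))
      (h.cellLeft_add_le_cellLeft_succ d k)

section Cells

variable {d : ℕ → ℕ} (hd : ∀ j, d j < branching δ q j)
include hd

theorem strictAnti_cellRight : StrictAnti (cellRight δ q d) :=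
  strictAnti_nat_of_succ_lt fun k => h.cellRight_succ_lt (hd k)

theorem cellLeft_le_cellRight (i k : ℕ) : cellLeft δ q d i ≤ cellRight δ q d k := by
  rcases le_total i k with hik | hki
  · exact ((h.strictMono_cellLeft d).monotone hik).trans (h.cellLeft_lt_cellRight d k).le
  · exact (h.cellLeft_lt_cellRight d i).le.trans ((h.strictAnti_cellRight hd).antitone hki)

theorem cellLeft_lt_cantorPoint (k : ℕ) : cellLeft δ q d k < cantorPoint δ q d :=
  (h.strictMono_cellLeft d k.lt_succ_self).trans_le <|
    le_ciSup ⟨cellRight δ q d 0, forall_mem_range.2 fun i => h.cellLeft_le_cellRight hd i 0⟩ _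

theorem cantorPoint_lt_cellRight (k : ℕ) : cantorPoint δ q d < cellRight δ q d k :=
  (ciSup_le fun i => h.cellLeft_le_cellRight hd i (k + 1)).trans_lt
    (h.strictAnti_cellRight hd k.lt_succ_self)

theorem delta_lt_nint_mul_cantorPoint (k : ℕ) : δ < nint (q k * cantorPoint δ q d) := by
  have hq := h.pos k
  have hl := h.cellLeft_lt_cantorPoint hd k
  have hr := h.cantorPoint_lt_cellRight hd k
  rw [cellLeft, div_lt_iff₀' hq] at hl
  rw [cellRight, lt_div_iff₀' hq] at hr
  exact delta_lt_nint_of_mem_Ioo ⟨hl, hr⟩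

theorem cantorPoint_mem_Icc (hq0 : 1 ≤ q 0) : cantorPoint δ q d ∈ Icc 0 1 := by
  have hl := h.cellLeft_lt_cantorPoint hd 0
  have hr := h.cantorPoint_lt_cellRight hd 0
  rw [cellLeft_zero] at hl
  rw [cellRight, cellIndex, lt_div_iff₀ (h.pos 0)] at hr
  have := h.delta_pos
  constructor
  · exact (div_pos this (h.pos 0)).le.trans hl.le
  · push_cast at hr
    nlinarith

theorem cantorPoint_sub_ge {e : ℕ → ℕ} (he : ∀ j, e j < branching δ q j) {k : ℕ}
    (hde : ∀ j < k, d j = e j) (hlt : d k < e k) :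
    2 * δ * ((e k : ℝ) - d k) / q (k + 1) ≤ cantorPoint δ q e - cantorPoint δ q d := by
  have hq := h.pos (k + 1)
  have hu : (d k : ℝ) + 1 ≤ e k := mod_cast hlt
  have hstep : cellLeft δ q e (k + 1) = cellLeft δ q d (k + 1) + ((e k : ℝ) - d k) / q (k + 1) := by
    rw [cellLeft_succ, cellLeft_succ, cellLeft, cellLeft, cellIndex_congr hde, ← add_div]
    ring_nf
  have hgap : 2 * δ * ((e k : ℝ) - d k) / q (k + 1)
      ≤ ((e k : ℝ) - d k) / q (k + 1) - (1 - 2 * δ) / q (k + 1) := by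
    rw [← sub_div, div_le_div_iff_of_pos_right hq]
    nlinarith [h.one_sub_two_mul_pos]
  linarith [h.cellLeft_lt_cantorPoint he (k + 1), h.cantorPoint_lt_cellRight hd (k + 1),
    cellRight_eq d hq.ne' (δ := δ)]

end Cells

theorem digit_lt (y : ℝ) (j : ℕ) : digit δ q y j < branching δ q j := by
  have hm : (0 : ℝ) < branching δ q j := mod_cast (two_pos.trans_le (h.two_le_branching j))
  rw [digit, Nat.floor_lt (mul_nonneg hm.le (Int.fract_nonneg _))]
  exact mul_lt_of_lt_one_right hm (Int.fract_lt_one _)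

theorem eq_of_forall_digit_eq {y y' : ℝ} (hy : ⌊y⌋ = ⌊y'⌋)
    (hde : ∀ j, digit δ q y j = digit δ q y' j) : y = y' := by
  by_contra hne
  obtain ⟨k, hk⟩ := exists_pow_lt_of_lt_one (abs_pos.2 (sub_ne_zero.2 hne)) one_half_lt_one
  have hfloor := Int.abs_sub_lt_one_of_floor_eq_floor
    (floor_branchProd_mul_eq (q := q) (k := k) hy fun j _ => hde j)
  have hM := h.pow_le_branchProd k
  rw [← mul_sub, abs_mul, abs_of_pos (h.branchProd_pos k)] at hfloor
  have : |y - y'| * 2 ^ k < 1 := by nlinarith [abs_nonneg (y - y')]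
  rw [div_pow, one_pow, div_lt_iff₀ (by positivity)] at hk
  linarith

theorem abs_sub_le_of_digit_lt {y y' : ℝ} (hy : ⌊y⌋ = ⌊y'⌋) {k : ℕ}
    (hde : ∀ j < k, digit δ q y j = digit δ q y' j) (hlt : digit δ q y k < digit δ q y' k) :
    |y - y'| ≤ 2 * ((digit δ q y' k : ℝ) - digit δ q y k) / branchProd δ q (k + 1) := by
  have hM := h.branchProd_pos (k + 1)
  have hu : (digit δ q y k : ℝ) + 1 ≤ digit δ q y' k := mod_cast hlt
  have hfl : (⌊branchProd δ q (k + 1) * y'⌋ : ℝ) - ⌊branchProd δ q (k + 1) * y⌋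
      = (digit δ q y' k : ℝ) - digit δ q y k := by
    rw [floor_branchProd_succ_mul, floor_branchProd_succ_mul, floor_branchProd_mul_eq hy hde]
    push_cast
    ring
  have h1 := Int.floor_le (branchProd δ q (k + 1) * y)
  have h2 := Int.lt_floor_add_one (branchProd δ q (k + 1) * y)
  have h3 := Int.floor_le (branchProd δ q (k + 1) * y')
  have h4 := Int.lt_floor_add_one (branchProd δ q (k + 1) * y')
  rw [le_div_iff₀ hM, ← abs_of_pos hM, ← abs_mul, abs_le]
  constructor <;> nlinarith

theorem abs_sub_le_rpow_of_digit_lt {r B : ℝ} (hr0 : 0 ≤ r) (hr1 : r ≤ 1)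
    (hB : ∀ k, 1 ≤ B * (((1 - 2 * δ) / 4) ^ k * q k ^ (1 - r))) {y y' : ℝ} (hy : ⌊y⌋ = ⌊y'⌋)
    {k : ℕ} (hde : ∀ j < k, digit δ q y j = digit δ q y' j)
    (hlt : digit δ q y k < digit δ q y' k) :
    |y - y'| ≤ 2 * q 0 * B / ((1 - 2 * δ) / 4 * (2 * δ) ^ r) *
      |cantorPoint δ q (digit δ q y') - cantorPoint δ q (digit δ q y)| ^ r := by
  set c := (1 - 2 * δ) / 4
  set u : ℝ := (digit δ q y' k : ℝ) - digit δ q y k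
  set t := u / q (k + 1)
  have hc : 0 < c := by have := h.one_sub_two_mul_pos; positivity
  have hδ := h.delta_pos
  have hq := h.pos k
  have hq' := h.pos (k + 1)
  have hM := h.branchProd_pos (k + 1)
  have hu : 0 ≤ u := sub_nonneg.2 (mod_cast hlt.le)
  have hum : u ≤ branching δ q k := by
    have : (digit δ q y' k : ℝ) < branching δ q k := mod_cast h.digit_lt y' k
    linarith [(Nat.cast_nonneg (digit δ q y k) : (0 : ℝ) ≤ _)]
  have ht : 0 ≤ t := div_nonneg hu hq'.le
  have htq : t * q k ≤ 1 := by
    rw [div_mul_eq_mul_div, div_le_one hq']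
    exact (mul_le_mul_of_nonneg_right hum hq.le).trans (h.branching_mul_le k)
  have htr : t ≤ B * c ^ k * t ^ r :=
    le_mul_rpow_of_mul_le_one ht hq htq hr1 (by simpa only [mul_assoc] using hB k)
  have hprod : c ^ (k + 1) * u ≤ branchProd δ q (k + 1) * q 0 * t := by
    have := mul_le_mul_of_nonneg_right (h.pow_mul_le_branchProd_mul (k + 1)) ht
    rwa [mul_assoc, mul_div_cancel₀ _ hq'.ne'] at this
  have hsep : 2 * δ * t ≤
      |cantorPoint δ q (digit δ q y') - cantorPoint δ q (digit δ q y)| := by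
    refine le_trans ?_ ((h.cantorPoint_sub_ge (h.digit_lt y) (h.digit_lt y') hde hlt).trans
      (le_abs_self _))
    rw [mul_div_assoc]
  calc |y - y'| ≤ 2 * u / branchProd δ q (k + 1) := h.abs_sub_le_of_digit_lt hy hde hlt
    _ ≤ 2 * q 0 * t / c ^ (k + 1) := by
      rw [div_le_div_iff₀ hM (by positivity)]
      nlinarith
    _ ≤ 2 * q 0 * (B * c ^ k * t ^ r) / c ^ (k + 1) := by
      have := h.pos 0
      gcongr
    _ = 2 * q 0 * B / (c * (2 * δ) ^ r) * (2 * δ * t) ^ r := by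
      rw [Real.mul_rpow (by positivity) ht, pow_succ]
      field_simp
    _ ≤ _ := by
      have : 0 ≤ 2 * q 0 * B / (c * (2 * δ) ^ r) := by
        have := h.pos 0
        have hB0 : 0 < B := pos_of_mul_pos_left (one_pos.trans_le (hB 0)) (by positivity)
        positivity
      gcongr

theorem abs_sub_le_rpow {r B : ℝ} (hr0 : 0 < r) (hr1 : r ≤ 1)
    (hB : ∀ k, 1 ≤ B * (((1 - 2 * δ) / 4) ^ k * q k ^ (1 - r))) {y y' : ℝ} (hy : ⌊y⌋ = ⌊y'⌋) :
    |y - y'| ≤ 2 * q 0 * B / ((1 - 2 * δ) / 4 * (2 * δ) ^ r) *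
      |cantorPoint δ q (digit δ q y) - cantorPoint δ q (digit δ q y')| ^ r := by
  rcases lt_trichotomy (toLex (digit δ q y)) (toLex (digit δ q y')) with
    ⟨k, hde, hlt⟩ | heq | ⟨k, hde, hlt⟩
  · rw [abs_sub_comm (cantorPoint δ q _)]
    exact h.abs_sub_le_rpow_of_digit_lt hr0.le hr1 hB hy hde hlt
  · rw [h.eq_of_forall_digit_eq hy (congrFun (toLex.injective heq))]
    simp [Real.zero_rpow hr0.ne']
  · rw [abs_sub_comm y]
    exact h.abs_sub_le_rpow_of_digit_lt hr0.le hr1 hB hy.symm hde hlt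

theorem le_dimH_image_cantorPoint_digit {r : ℝ≥0} (hr0 : 0 < r) (hr1 : r ≤ 1)
    (hgrow : ∀ᶠ k in atTop, 1 ≤ ((1 - 2 * δ) / 4) ^ k * q k ^ (1 - (r : ℝ))) :
    (r : ℝ≥0∞) ≤ dimH ((fun y => cantorPoint δ q (digit δ q y)) '' Ico 0 1) := by
  have hc : 0 < (1 - 2 * δ) / 4 := by linarith [h.one_sub_two_mul_pos]
  obtain ⟨B, hB⟩ := exists_forall_one_le_mul_of_eventually
    (fun k => mul_pos (pow_pos hc k) (Real.rpow_pos_of_pos (h.pos k) _)) hgrow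
  have hdim := dimH_le_dimH_image_div_of_dist_le (s := Ico (0 : ℝ) 1)
    (g := fun y => cantorPoint δ q (digit δ q y)) (C := Real.toNNReal _) hr0
    fun y hy y' hy' => (h.abs_sub_le_rpow (mod_cast hr0) (mod_cast hr1) hB
      ((Int.floor_eq_zero_iff.2 hy).trans (Int.floor_eq_zero_iff.2 hy').symm)).trans
        (mul_le_mul_of_nonneg_right (Real.le_coe_toNNReal _) (by positivity))
  rw [Real.dimH_of_nonempty_interior (by simp), Module.finrank_self, Nat.cast_one,
    ENNReal.le_div_iff_mul_le (Or.inl (by exact_mod_cast hr0.ne')) (Or.inl ENNReal.coe_ne_top),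
    one_mul] at hdim
  exact hdim

end IsLacunary

theorem IsLacunary.cantorPoint_mem_of_shift {δ : ℝ} {n : ℕ → ℕ} {K : ℕ}
    (h : IsLacunary δ fun k => (n (k + K) : ℝ)) {d : ℕ → ℕ}
    (hd : ∀ j, d j < branching δ (fun k => (n (k + K) : ℝ)) j) :
    cantorPoint δ (fun k => (n (k + K) : ℝ)) d ∈
      {x ∈ Icc (0 : ℝ) 1 | ∀ᶠ k in atTop, δ < nint (n k * x)} := by
  refine ⟨h.cantorPoint_mem_Icc hd (Nat.one_le_cast.2 (Nat.cast_pos.1 (h.pos 0))), ?_⟩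
  filter_upwards [eventually_ge_atTop K] with k hk
  simpa [Nat.sub_add_cancel hk] using h.delta_lt_nint_mul_cantorPoint hd (k - K)

theorem exists_isLacunary_shift {δ : ℝ} (hδ0 : 0 < δ) (hδ : δ < 1 / 2) {n : ℕ → ℕ}
    (hratio : ∀ᶠ k in atTop, (4 : ℝ) / (1 - 2 * δ) ≤ (n (k + 1) : ℝ) / n k) :
    ∃ K, IsLacunary δ fun k => (n (k + K) : ℝ) := by
  obtain ⟨K, hK⟩ := eventually_atTop.1 hratio
  have hc : 0 < (4 : ℝ) / (1 - 2 * δ) := div_pos four_pos (by linarith)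
  -- `n k = 0` would make the ratio `n (k + 1) / 0 = 0`.
  have hpos : ∀ k ≥ K, (0 : ℝ) < n k := fun k hk => Nat.cast_pos.2 <| Nat.pos_of_ne_zero
    fun h0 => by simpa [h0] using hc.trans_le (hK k hk)
  refine ⟨K, hδ0, fun k => hpos _ le_add_self, fun k => ?_⟩
  have := hK (k + K) le_add_self
  rw [div_le_div_iff₀ (by linarith) (hpos _ le_add_self), add_right_comm] at this
  linarith

theorem stmt5 (δ : ℝ) (hδ0 : 0 < δ) (hδ : δ < 1 / 2)
    (n : ℕ → ℕ)
    (hratio : ∀ᶠ k in atTop, (4 : ℝ) / (1 - 2 * δ) ≤ (n (k + 1) : ℝ) / n k)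
    (hgrow : Tendsto (fun k : ℕ => (n k : ℝ) ^ ((k : ℝ)⁻¹)) atTop atTop) :
    dimH {x ∈ Set.Icc (0 : ℝ) 1 | ∀ᶠ k in atTop, δ < nint (n k * x)} = 1 := by
  obtain ⟨K, h⟩ := exists_isLacunary_shift hδ0 hδ hratio
  refine le_antisymm ((dimH_mono (subset_univ _)).trans Real.dimH_univ.le) ?_
  refine ENNReal.le_of_forall_nnreal_lt fun r hr => ?_
  rcases eq_or_ne r 0 with rfl | hr0
  · simp
  have hr1 : r < 1 := mod_cast hr
  have hc : 0 < (1 - 2 * δ) / 4 := by linarith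
  have hbig := (tendsto_add_atTop_nat K).eventually <| eventually_one_le_pow_mul_rpow
    (fun k => Nat.cast_nonneg (n k)) hgrow hc (sub_pos.2 (NNReal.coe_lt_one.2 hr1))
  set q : ℕ → ℝ := fun k => n (k + K)
  calc (r : ℝ≥0∞) ≤ dimH ((fun y => cantorPoint δ q (digit δ q y)) '' Ico 0 1) := by
        refine h.le_dimH_image_cantorPoint_digit (pos_iff_ne_zero.2 hr0) hr1.le ?_
        filter_upwards [hbig] with k hk
        exact hk.trans (mul_le_mul_of_nonneg_right
          (pow_le_pow_of_le_one hc.le (by linarith) le_self_add) (by positivity))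
    _ ≤ _ := dimH_mono <| by
        rintro _ ⟨y, -, rfl⟩
        exact h.cantorPoint_mem_of_shift (h.digit_lt y)
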